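/- arXiv:2505.03582 — 3 statements merged into one kernel-verified Lean document; each statement's English description precedes it below -/
import Mathlib

section
/- The λ-gradient map is involutive in the following algebraic sense: if θ = ∇ψ(η)/(1 - λ ∇ψ(η)·η) and η = ∇φ(θ)/(1 - λ ∇φ(θ)·θ) for potentials φ, ψ, then 1 - λ ∇ψ(η)·η = 1/(1 + λ θ·η) = 1 - λ ∇φ(θ)·θ. -/
open RealInnerProductSpace

theorem one_div_one_add_mul_inner_of_eq_smul {E : Type*} [NormedAddCommGroup E]
    [InnerProductSpace ℝ E] {lam : ℝ} {g x y : E} (hden : 1 - lam * ⟪g, x⟫ ≠ 0)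
    (hy : y = (1 - lam * ⟪g, x⟫)⁻¹ • g) :
    1 / (1 + lam * ⟪y, x⟫) = 1 - lam * ⟪g, x⟫ := by
  have hyx : ⟪y, x⟫ = (1 - lam * ⟪g, x⟫)⁻¹ * ⟪g, x⟫ := by
    rw [hy, real_inner_smul_left]
  rw [hyx]
  field_simp
  ring

theorem lambda_gradient_involutive_general (d : ℕ) (lam : ℝ)
    (φ ψ : EuclideanSpace ℝ (Fin d) → ℝ) (θ η : EuclideanSpace ℝ (Fin d))
    (hdenψ : 1 - lam * ⟪gradient ψ η, η⟫ ≠ 0)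
    (hdenφ : 1 - lam * ⟪gradient φ θ, θ⟫ ≠ 0)
    (hθ : θ = (1 - lam * ⟪gradient ψ η, η⟫)⁻¹ • gradient ψ η)
    (hη : η = (1 - lam * ⟪gradient φ θ, θ⟫)⁻¹ • gradient φ θ) :
    1 - lam * ⟪gradient ψ η, η⟫ = 1 / (1 + lam * ⟪θ, η⟫) ∧
      1 / (1 + lam * ⟪θ, η⟫) = 1 - lam * ⟪gradient φ θ, θ⟫ := by
  refine ⟨(one_div_one_add_mul_inner_of_eq_smul hdenψ hθ).symm, ?_⟩
  rw [real_inner_comm]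
  exact one_div_one_add_mul_inner_of_eq_smul hdenφ hη

/-- Involutivity of the λ-gradient: if `θ = ∇^{(λ)}ψ(η)` and `η = ∇^{(λ)}φ(θ)`, then
`1 - λ ∇ψ(η)·η = 1/(1 + λ θ·η) = 1 - λ ∇φ(θ)·θ`. -/
theorem lambda_gradient_involutive (d : ℕ) (lam : ℝ) (hlam : lam ≠ 0)
    (φ ψ : EuclideanSpace ℝ (Fin d) → ℝ) (θ η : EuclideanSpace ℝ (Fin d))
    (hφ : DifferentiableAt ℝ φ θ) (hψ : DifferentiableAt ℝ ψ η)
    (hdenψ : 1 - lam * ⟪gradient ψ η, η⟫ ≠ 0)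
    (hdenφ : 1 - lam * ⟪gradient φ θ, θ⟫ ≠ 0)
    (hθ : θ = (1 - lam * ⟪gradient ψ η, η⟫)⁻¹ • gradient ψ η)
    (hη : η = (1 - lam * ⟪gradient φ θ, θ⟫)⁻¹ • gradient φ θ) :
    1 - lam * ⟪gradient ψ η, η⟫ = 1 / (1 + lam * ⟪θ, η⟫) ∧
      1 / (1 + lam * ⟪θ, η⟫) = 1 - lam * ⟪gradient φ θ, θ⟫ :=
  lambda_gradient_involutive_general d lam φ ψ θ η hdenψ hdenφ hθ hη
end

section
/- Suppose ∇φ(θ̂) = (1/n) Σ_i y_i/(1 + λ θ̂·y_i) with all 1 + λ θ̂·y_i > 0, and define weights w_i = (1/(1 + λ θ̂·y_i)) / Σ_j (1/(1 + λ θ̂·y_j)) and η̂ = ∇φ(θ̂)/(1 − λ ∇φ(θ̂)·θ̂). Then the weights w_i are nonnegative, sum to 1, and η̂ = Σ_{i=1}^n w_i y_i; in particular η̂ lies in the convex hull of {y_1, …, y_n}. -/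
/-!
Since `1 − λ ⟪(1 + λ ⟪θ, y⟫)⁻¹ • y, θ⟫ = (1 + λ ⟪θ, y⟫)⁻¹`, averaging over the `y_i` turns the
first-order condition `∇φ(θ̂) = n⁻¹ Σ aᵢ yᵢ`, `aᵢ = (1 + λ θ̂·yᵢ)⁻¹`, into
`1 − λ ∇φ(θ̂)·θ̂ = n⁻¹ Σ aᵢ`. The factors `n⁻¹` cancel in the λ-gradient, which is therefore the
centre of mass of the `yᵢ` with the positive weights `aᵢ`.
-/

open RealInnerProductSpace Finset

section LambdaGradient

variable {E : Type*} [NormedAddCommGroup E] [InnerProductSpace ℝ E]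

noncomputable def lambdaGrad (lam : ℝ) (θ g : E) : E :=
  (1 - lam * ⟪g, θ⟫)⁻¹ • g

lemma one_sub_mul_inner_inv_smul {lam : ℝ} {θ y : E} (h : 1 + lam * ⟪θ, y⟫ ≠ 0) :
    1 - lam * ⟪(1 + lam * ⟪θ, y⟫)⁻¹ • y, θ⟫ = (1 + lam * ⟪θ, y⟫)⁻¹ := by
  rw [real_inner_smul_left, real_inner_comm θ y]
  field_simp
  ring

lemma one_sub_mul_inner_average {ι : Type*} [Fintype ι] [Nonempty ι] (lam : ℝ) (θ : E)
    (v : ι → E) :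
    1 - lam * ⟪(Fintype.card ι : ℝ)⁻¹ • ∑ i, v i, θ⟫ =
      (Fintype.card ι : ℝ)⁻¹ * ∑ i, (1 - lam * ⟪v i, θ⟫) := by
  have hcard : (Fintype.card ι : ℝ) ≠ 0 := Nat.cast_ne_zero.2 Fintype.card_ne_zero
  rw [real_inner_smul_left, sum_inner, sum_sub_distrib, ← mul_sum, sum_const, card_univ,
    nsmul_eq_mul, mul_one]
  field_simp

lemma lambdaGrad_average_eq_centerMass {ι : Type*} [Fintype ι] [Nonempty ι] {lam : ℝ} {θ : E}
    {y : ι → E} (h : ∀ i, 1 + lam * ⟪θ, y i⟫ ≠ 0) :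
    lambdaGrad lam θ ((Fintype.card ι : ℝ)⁻¹ • ∑ i, (1 + lam * ⟪θ, y i⟫)⁻¹ • y i) =
      univ.centerMass (fun i => (1 + lam * ⟪θ, y i⟫)⁻¹) y := by
  have hcard : (Fintype.card ι : ℝ) ≠ 0 := Nat.cast_ne_zero.2 Fintype.card_ne_zero
  rw [lambdaGrad, one_sub_mul_inner_average,
    sum_congr rfl fun i _ => one_sub_mul_inner_inv_smul (h i), smul_smul, mul_inv, inv_inv, mul_right_comm, mul_inv_cancel₀ hcard, one_mul, centerMass]

end LambdaGradient

lemma Finset.centerMass_eq_sum_div_smul {ι E : Type*} [AddCommGroup E] [Module ℝ E]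
    (t : Finset ι) (w : ι → ℝ) (z : ι → E) :
    t.centerMass w z = ∑ i ∈ t, (w i / ∑ j ∈ t, w j) • z i := by
  simp only [centerMass, smul_sum, smul_smul, div_eq_inv_mul]

theorem mle_dual_convex_combination_general (d n : ℕ) (hn : 0 < n) (lam : ℝ)
    (y : Fin n → EuclideanSpace ℝ (Fin d))
    (φ : EuclideanSpace ℝ (Fin d) → ℝ) (θhat : EuclideanSpace ℝ (Fin d))
    (hpos : ∀ i, 0 < 1 + lam * ⟪θhat, y i⟫)
    (hgrad : gradient φ θhat = (n : ℝ)⁻¹ • ∑ i, (1 + lam * ⟪θhat, y i⟫)⁻¹ • y i)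
    (w : Fin n → ℝ)
    (hw : w = fun i => (1 + lam * ⟪θhat, y i⟫)⁻¹ / ∑ j, (1 + lam * ⟪θhat, y j⟫)⁻¹)
    (ηhat : EuclideanSpace ℝ (Fin d))
    (hη : ηhat = (1 - lam * ⟪gradient φ θhat, θhat⟫)⁻¹ • gradient φ θhat) :
    (∀ i, 0 ≤ w i) ∧ (∑ i, w i = 1) ∧ ηhat = ∑ i, w i • y i ∧
      ηhat ∈ convexHull ℝ (Set.range y) := by
  have : Nonempty (Fin n) := ⟨⟨0, hn⟩⟩
  set a : Fin n → ℝ := fun i => (1 + lam * ⟪θhat, y i⟫)⁻¹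
  have ha : ∀ i, 0 < a i := fun i => inv_pos.2 (hpos i)
  have hsum : 0 < ∑ i, a i := sum_pos (fun i _ => ha i) univ_nonempty
  have hη_centerMass : ηhat = univ.centerMass a y := by
    have hmean := lambdaGrad_average_eq_centerMass fun i => (hpos i).ne'
    rw [Fintype.card_fin, ← hgrad] at hmean
    rw [hη]
    exact hmean
  subst hw
  refine ⟨fun i => div_nonneg (ha i).le hsum.le, by rw [← sum_div, div_self hsum.ne'], ?_, ?_⟩
  · rw [hη_centerMass, centerMass_eq_sum_div_smul]
  · rw [hη_centerMass]
    exact univ.centerMass_mem_convexHull (fun i _ => (ha i).le) hsum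
      fun i _ => Set.mem_range_self i

/-- Under the first-order condition, the dual MLE `η̂ = ∇φ(θ̂)/(1 − λ ∇φ(θ̂)·θ̂)` is the
convex combination `Σ_i w_i y_i` with weights `w_i ∝ 1/(1 + λ θ̂·y_i)`; in particular the
weights are nonnegative, sum to one, and `η̂` lies in the convex hull of the `y_i`. -/
theorem mle_dual_convex_combination (d n : ℕ) (hn : 0 < n) (lam : ℝ) (hlam : lam ≠ 0)
    (y : Fin n → EuclideanSpace ℝ (Fin d))
    (φ : EuclideanSpace ℝ (Fin d) → ℝ) (θhat : EuclideanSpace ℝ (Fin d))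
    (hpos : ∀ i, 0 < 1 + lam * ⟪θhat, y i⟫)
    (hφ : DifferentiableAt ℝ φ θhat)
    (hden : 0 < 1 - lam * ⟪gradient φ θhat, θhat⟫)
    (hgrad : gradient φ θhat = (n : ℝ)⁻¹ • ∑ i, (1 + lam * ⟪θhat, y i⟫)⁻¹ • y i)
    (w : Fin n → ℝ)
    (hw : w = fun i => (1 + lam * ⟪θhat, y i⟫)⁻¹ / ∑ j, (1 + lam * ⟪θhat, y j⟫)⁻¹)
    (ηhat : EuclideanSpace ℝ (Fin d))
    (hη : ηhat = (1 - lam * ⟪gradient φ θhat, θhat⟫)⁻¹ • gradient φ θhat) :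
    (∀ i, 0 ≤ w i) ∧ (∑ i, w i = 1) ∧ ηhat = ∑ i, w i • y i ∧
      ηhat ∈ convexHull ℝ (Set.range y) :=
  mle_dual_convex_combination_general d n hn lam y φ θhat hpos hgrad w hw ηhat hη
end

section
/- Monotonicity of the likelihood for the fixed-point MLE iteration: let λ < 0, Ξ ⊂ ℝ^d convex open, Ψ : Ξ → (0,∞) differentiable and strictly concave, and y_1,…,y_n ∈ Ξ. Define κ_i(η) = Ψ(η) + ∇Ψ(η)·(y_i − η) (assumed positive on Ξ), weights w_i(η) = κ_i(η)^{-1}/Σ_j κ_j(η)^{-1}, and the update T(η) = Σ_i w_i(η) y_i. If η ∈ Ξ, T(η) ∈ Ξ, and T(η) ≠ η, then ∏_{i=1}^n κ_i(T(η)) < ∏_{i=1}^n κ_i(η); equivalently, the log-likelihood ℓ = (1/λ) Σ_i log κ_i strictly increases under T. -/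
/-!
With the harmonic weights `w_i = κ_i(η)⁻¹ / Σ_j κ_j(η)⁻¹`, each `κ_i` is affine in `y_i`, so
`Σ_i w_i κ_i(ξ) = Ψ(ξ) + ⟪∇Ψ(ξ), T(η) - ξ⟫` for every `ξ`. At `ξ = T(η)` this is `Ψ(T(η))`, at
`ξ = η` it is `n / Σ_j κ_j(η)⁻¹`, and strict concavity (the tangent plane at `η` lies strictly
above the graph at `T(η)`) compares the two: `Σ_i κ_i(T(η)) / κ_i(η) < n`. AM–GM, in the form
`log t ≤ t - 1`, turns this into `∏_i κ_i(T(η)) < ∏_i κ_i(η)`.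
-/

open RealInnerProductSpace Finset

theorem StrictConcaveOn.comp_affineMap {𝕜 E F β : Type*} [Ring 𝕜] [PartialOrder 𝕜]
    [AddCommGroup E] [Module 𝕜 E] [AddCommGroup F] [Module 𝕜 F] [AddCommMonoid β]
    [PartialOrder β] [SMul 𝕜 β] {f : F → β} {s : Set F} (g : E →ᵃ[𝕜] F)
    (hg : Function.Injective g) (hf : StrictConcaveOn 𝕜 s f) :
    StrictConcaveOn 𝕜 (g ⁻¹' s) (f ∘ g) :=
  ⟨hf.1.affine_preimage g, fun _ hx _ hy hxy _ _ ha hb hab => by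
    simpa only [Function.comp_apply, Convex.combo_affine_apply hab] using
      hf.2 hx hy (hg.ne hxy) ha hb hab⟩

theorem StrictConcaveOn.lt_add_of_hasFDerivAt {E : Type*} [NormedAddCommGroup E]
    [NormedSpace ℝ E] {s : Set E} {f : E → ℝ} {f' : E →L[ℝ] ℝ} {x z : E}
    (hf : StrictConcaveOn ℝ s f) (hx : x ∈ s) (hz : z ∈ s) (hzx : z ≠ x)
    (hf' : HasFDerivAt f f' x) :
    f z < f x + f' (z - x) := by
  set L := AffineMap.lineMap (k := ℝ) x z
  have hL : StrictConcaveOn ℝ (L ⁻¹' s) (f ∘ L) :=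
    hf.comp_affineMap L (AffineMap.lineMap_injective ℝ hzx.symm)
  have hderiv : HasDerivAt (f ∘ L) (f' (z - x)) 0 := by
    have := (AffineMap.lineMap_apply_zero x z (k := ℝ)).symm ▸ hf'
    exact this.comp_hasDerivAt 0 AffineMap.hasDerivAt_lineMap
  have hslope := hL.slope_lt_of_hasDerivAt (x := 0) (y := 1) (by simpa [L] using hx)
    (by simpa [L] using hz) zero_lt_one hderiv
  simp only [slope, sub_zero, inv_one, Function.comp_apply, AffineMap.lineMap_apply_one,
    AffineMap.lineMap_apply_zero, vsub_eq_sub, smul_eq_mul, one_mul, L] at hslope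
  linarith

theorem Finset.sum_mul_add_inner_sub {ι E : Type*} [NormedAddCommGroup E]
    [InnerProductSpace ℝ E] {s : Finset ι} {w : ι → ℝ} (hw : ∑ i ∈ s, w i = 1)
    (c : ℝ) (g ξ : E) (y : ι → E) :
    ∑ i ∈ s, w i * (c + ⟪g, y i - ξ⟫) = c + ⟪g, ∑ i ∈ s, w i • y i - ξ⟫ := by
  have hcomb : ∑ i ∈ s, w i • y i - ξ = ∑ i ∈ s, w i • (y i - ξ) := by
    simp only [smul_sub, sum_sub_distrib, ← sum_smul, hw, one_smul]
  simp only [hcomb, inner_sum, real_inner_smul_right, mul_add, sum_add_distrib, ← sum_mul, hw,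
    one_mul]

theorem Finset.sum_div_lt_card_of_harmonic_weighted_lt {ι : Type*} {s : Finset ι}
    {a b : ι → ℝ} (ha : ∀ i ∈ s, 0 < a i)
    (h : ∑ i ∈ s, (a i)⁻¹ / (∑ j ∈ s, (a j)⁻¹) * b i <
      ∑ i ∈ s, (a i)⁻¹ / (∑ j ∈ s, (a j)⁻¹) * a i) :
    ∑ i ∈ s, b i / a i < #s := by
  set S := ∑ j ∈ s, (a j)⁻¹
  have hS : 0 ≤ S⁻¹ := inv_nonneg.2 (sum_nonneg fun j hj => (inv_pos.2 (ha j hj)).le)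
  have hterm : ∀ c : ι → ℝ, ∑ i ∈ s, (a i)⁻¹ / S * c i = S⁻¹ * ∑ i ∈ s, c i / a i := fun c => by
    rw [mul_sum]; exact sum_congr rfl fun i _ => by ring
  rw [hterm, hterm, sum_congr rfl fun i hi => div_self (ha i hi).ne', sum_const, nsmul_one] at h
  exact lt_of_mul_lt_mul_left h hS

theorem Real.sum_log_lt_sum_log_of_sum_div_lt_card {ι : Type*} {s : Finset ι}
    {a b : ι → ℝ} (ha : ∀ i ∈ s, 0 < a i) (hb : ∀ i ∈ s, 0 < b i)
    (h : ∑ i ∈ s, b i / a i < #s) :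
    ∑ i ∈ s, Real.log (b i) < ∑ i ∈ s, Real.log (a i) := by
  have hlog : ∀ i ∈ s, Real.log (b i) - Real.log (a i) ≤ b i / a i - 1 := fun i hi => by
    rw [← Real.log_div (hb i hi).ne' (ha i hi).ne']
    exact Real.log_le_sub_one_of_pos (div_pos (hb i hi) (ha i hi))
  have := sum_le_sum hlog
  simp only [sum_sub_distrib, sum_const, nsmul_one] at this
  linarith

theorem Real.prod_lt_prod_of_sum_div_lt_card {ι : Type*} {s : Finset ι}
    {a b : ι → ℝ} (ha : ∀ i ∈ s, 0 < a i) (hb : ∀ i ∈ s, 0 < b i)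
    (h : ∑ i ∈ s, b i / a i < #s) :
    ∏ i ∈ s, b i < ∏ i ∈ s, a i := by
  rw [← Real.log_lt_log_iff (prod_pos hb) (prod_pos ha), Real.log_prod (fun i hi => (hb i hi).ne'),
    Real.log_prod (fun i hi => (ha i hi).ne')]
  exact sum_log_lt_sum_log_of_sum_div_lt_card ha hb h

theorem likelihood_monotone_general (d n : ℕ) (hn : 0 < n) (lam : ℝ) (hlam : lam < 0)
    (Ξ : Set (EuclideanSpace ℝ (Fin d))) (hopen : IsOpen Ξ)
    (Ψ : EuclideanSpace ℝ (Fin d) → ℝ)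
    (hdiff : DifferentiableOn ℝ Ψ Ξ)
    (hconc : StrictConcaveOn ℝ Ξ Ψ)
    (y : Fin n → EuclideanSpace ℝ (Fin d))
    (κ : Fin n → EuclideanSpace ℝ (Fin d) → ℝ)
    (hκ : κ = fun i η => Ψ η + ⟪gradient Ψ η, y i - η⟫)
    (hκpos : ∀ i, ∀ η ∈ Ξ, 0 < κ i η)
    (w : Fin n → EuclideanSpace ℝ (Fin d) → ℝ)
    (hw : w = fun i η => (κ i η)⁻¹ / ∑ j, (κ j η)⁻¹)
    (T : EuclideanSpace ℝ (Fin d) → EuclideanSpace ℝ (Fin d))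
    (hT : T = fun η => ∑ i, w i η • y i)
    (η : EuclideanSpace ℝ (Fin d)) (hη : η ∈ Ξ) (hTη : T η ∈ Ξ) (hne : T η ≠ η) :
    (∏ i, κ i (T η) < ∏ i, κ i η) ∧
      (1 / lam) * ∑ i, Real.log (κ i (T η)) > (1 / lam) * ∑ i, Real.log (κ i η) := by
  have : Nonempty (Fin n) := Fin.pos_iff_nonempty.1 hn
  have hκη : ∀ i ∈ univ, 0 < κ i η := fun i _ => hκpos i η hη
  have hκTη : ∀ i ∈ univ, 0 < κ i (T η) := fun i _ => hκpos i (T η) hTη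
  have hwsum : ∑ i, w i η = 1 := by
    rw [hw, ← sum_div]
    exact div_self (sum_pos (fun j hj => inv_pos.2 (hκη j hj)) univ_nonempty).ne'
  have hmean : ∀ ξ, ∑ i, w i η * κ i ξ = Ψ ξ + ⟪gradient Ψ ξ, T η - ξ⟫ := fun ξ => by
    rw [hκ, hT]
    exact sum_mul_add_inner_sub hwsum _ _ _ _
  have htangent : Ψ (T η) < Ψ η + ⟪gradient Ψ η, T η - η⟫ := by
    rw [inner_gradient_left]
    exact hconc.lt_add_of_hasFDerivAt hη hTη hne
      (hdiff.differentiableAt (hopen.mem_nhds hη)).hasFDerivAt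
  have hratio : ∑ i, κ i (T η) / κ i η < #(univ : Finset (Fin n)) := by
    have hweighted : ∑ i, w i η * κ i (T η) < ∑ i, w i η * κ i η := by
      simpa only [hmean, sub_self, inner_zero_right, add_zero] using htangent
    rw [hw] at hweighted
    exact sum_div_lt_card_of_harmonic_weighted_lt hκη hweighted
  exact ⟨Real.prod_lt_prod_of_sum_div_lt_card hκη hκTη hratio,
    mul_lt_mul_of_neg_left (Real.sum_log_lt_sum_log_of_sum_div_lt_card hκη hκTη hratio)
      (one_div_neg.2 hlam)⟩

/-- Monotonicity of the likelihood along the fixed-point MLE iteration: with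
`κ_i(η) = Ψ(η) + ∇Ψ(η)·(y_i − η)` positive on `Ξ`, weights
`w_i(η) = κ_i(η)⁻¹/Σ_j κ_j(η)⁻¹` and update `T(η) = Σ_i w_i(η) y_i`, if `T(η) ≠ η`
(with `η, T(η) ∈ Ξ`) then `∏_i κ_i(T(η)) < ∏_i κ_i(η)`; equivalently the log-likelihood
`ℓ = (1/λ) Σ_i log κ_i` strictly increases (`λ < 0`). -/
theorem likelihood_monotone (d n : ℕ) (hn : 0 < n) (lam : ℝ) (hlam : lam < 0)
    (Ξ : Set (EuclideanSpace ℝ (Fin d))) (hconv : Convex ℝ Ξ) (hopen : IsOpen Ξ)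
    (Ψ : EuclideanSpace ℝ (Fin d) → ℝ)
    (hdiff : DifferentiableOn ℝ Ψ Ξ)
    (hposΨ : ∀ η ∈ Ξ, 0 < Ψ η)
    (hconc : StrictConcaveOn ℝ Ξ Ψ)
    (y : Fin n → EuclideanSpace ℝ (Fin d)) (hy : ∀ i, y i ∈ Ξ)
    (κ : Fin n → EuclideanSpace ℝ (Fin d) → ℝ)
    (hκ : κ = fun i η => Ψ η + ⟪gradient Ψ η, y i - η⟫)
    (hκpos : ∀ i, ∀ η ∈ Ξ, 0 < κ i η)
    (w : Fin n → EuclideanSpace ℝ (Fin d) → ℝ)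
    (hw : w = fun i η => (κ i η)⁻¹ / ∑ j, (κ j η)⁻¹)
    (T : EuclideanSpace ℝ (Fin d) → EuclideanSpace ℝ (Fin d))
    (hT : T = fun η => ∑ i, w i η • y i)
    (η : EuclideanSpace ℝ (Fin d)) (hη : η ∈ Ξ) (hTη : T η ∈ Ξ) (hne : T η ≠ η) :
    (∏ i, κ i (T η) < ∏ i, κ i η) ∧
      (1 / lam) * ∑ i, Real.log (κ i (T η)) > (1 / lam) * ∑ i, Real.log (κ i η) :=
  likelihood_monotone_general d n hn lam hlam Ξ hopen Ψ hdiff hconc y κ hκ hκpos w hw T hT η hη hTη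
    hne
end
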